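/- (Perturbation bound) Let E̅₀, E̅₀' be initial upper expectation functionals and T̅, T̅' upper transition operators. Set Eₙ = d(E̅₀∘T̅ⁿ, E̅₀'∘T̅'ⁿ), E₀ = d(E̅₀, E̅₀'), D = d(T̅, T̅'), and ρᵢ = ρ(T̅ⁱ) the weak coefficient of ergodicity of T̅ⁱ. Then Eₙ ≤ E₀·ρₙ + D·Σ_{i=0}^{n-1} ρᵢ. -/

import Mathlib

/-!
Upper expectations, and the rows of upper transition operators, are monotone and commute with
the maps `f ↦ r • f + m`, `r ≥ 0`. For two such functionals `F`, `G` and an operator `S`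
preserving `L1`, the function `S f` ranges over an interval of length `ρ(S)`, so it equals
`ρ(S) • u + m` with `u ∈ L1`, whence `|F (S f) - G (S f)| ≤ ρ(S) d(F, G)`. Passing from
`E̅₀ ∘ T̅ⁿ` to `E̅₀' ∘ T̅ⁿ` costs `ρₙ E₀` by this bound; passing from there to `E̅₀' ∘ T̅'ⁿ` by
swapping one factor `T̅` for `T̅'` at a time costs `ρᵢ D` for the swap at depth `i`.
-/

open Finset Set

noncomputable section

/-- Functions with values in [0,1]. -/
def L1 (X : Type*) : Set (X → ℝ) := {f | ∀ x, 0 ≤ f x ∧ f x ≤ 1}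

/-- Probability mass function on a finite set. -/
def IsPMF {X : Type*} [Fintype X] (p : X → ℝ) : Prop :=
  (∀ x, 0 ≤ p x) ∧ ∑ x, p x = 1

/-- A credal set: nonempty compact convex set of pmfs. -/
def IsCredal {X : Type*} [Fintype X] (M : Set (X → ℝ)) : Prop :=
  M.Nonempty ∧ IsCompact M ∧ Convex ℝ M ∧ ∀ p ∈ M, IsPMF p

/-- Linear expectation with respect to a pmf. -/
def linExp {X : Type*} [Fintype X] (p f : X → ℝ) : ℝ := ∑ x, p x * f x

/-- Upper expectation functional of a credal set. -/
def upperExp {X : Type*} [Fintype X] (M : Set (X → ℝ)) (f : X → ℝ) : ℝ :=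
  sSup ((fun p => linExp p f) '' M)

/-- Lower expectation functional of a credal set. -/
def lowerExp {X : Type*} [Fintype X] (M : Set (X → ℝ)) (f : X → ℝ) : ℝ :=
  sInf ((fun p => linExp p f) '' M)

/-- Chebyshev (sup) distance between functions. -/
def dCheb {X : Type*} (f g : X → ℝ) : ℝ := ⨆ x, |f x - g x|

/-- Distance between two (upper) expectation functionals. -/
def dFun {X : Type*} (F G : (X → ℝ) → ℝ) : ℝ :=
  sSup ((fun f => |F f - G f|) '' L1 X)

/-- Distance between an upper and a lower expectation functional. -/
def dUL {X : Type*} (F G : (X → ℝ) → ℝ) : ℝ :=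
  sSup ((fun f => F f - G f) '' L1 X)

/-- Upper transition operator: rows are upper expectation functionals. -/
def IsUpperTrans {X : Type*} [Fintype X] (T : (X → ℝ) → (X → ℝ)) : Prop :=
  ∃ M : X → Set (X → ℝ), (∀ x, IsCredal (M x)) ∧ ∀ f x, T f x = upperExp (M x) f

/-- Matching pair of upper and lower transition operators from the same credal sets. -/
def IsTransPair {X : Type*} [Fintype X] (T Tl : (X → ℝ) → (X → ℝ)) : Prop :=
  ∃ M : X → Set (X → ℝ), (∀ x, IsCredal (M x)) ∧
    (∀ f x, T f x = upperExp (M x) f) ∧ (∀ f x, Tl f x = lowerExp (M x) f)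

/-- Distance between two (upper) transition operators. -/
def dOp {X : Type*} (T T' : (X → ℝ) → (X → ℝ)) : ℝ :=
  sSup ((fun f => dCheb (T f) (T' f)) '' L1 X)

/-- Imprecision distance between an upper and a lower transition operator. -/
def dOpUL {X : Type*} (T Tl : (X → ℝ) → (X → ℝ)) : ℝ :=
  sSup ((fun f => ⨆ x, (T f x - Tl f x)) '' L1 X)

/-- Weak coefficient of ergodicity. -/
def rho {X : Type*} (T : (X → ℝ) → (X → ℝ)) : ℝ :=
  sSup {r | ∃ f ∈ L1 X, ∃ x y : X, r = |T f x - T f y|}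

lemma zero_mem_L1 {X : Type*} : (0 : X → ℝ) ∈ L1 X := fun _ => ⟨le_rfl, zero_le_one⟩

structure IsMonotoneAffineEquivariant {X : Type*} (F : (X → ℝ) → ℝ) : Prop where
  monotone : Monotone F
  map_affine : ∀ (r m : ℝ) (f : X → ℝ), 0 ≤ r → F (fun x => r * f x + m) = r * F f + m

namespace IsMonotoneAffineEquivariant

variable {X : Type*} {F G : (X → ℝ) → ℝ}

lemma map_const (hF : IsMonotoneAffineEquivariant F) (m : ℝ) : F (fun _ => m) = m := by
  simpa using hF.map_affine 0 m 0 le_rfl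

lemma map_add_const (hF : IsMonotoneAffineEquivariant F) (f : X → ℝ) (m : ℝ) :
    F (fun x => f x + m) = F f + m := by
  simpa using hF.map_affine 1 m f zero_le_one

lemma abs_sub_le (hF : IsMonotoneAffineEquivariant F) {f g : X → ℝ} {c : ℝ}
    (h : ∀ x, |f x - g x| ≤ c) : |F f - F g| ≤ c := by
  have shift : ∀ u v : X → ℝ, (∀ x, u x ≤ v x + c) → F u ≤ F v + c := fun u v huv =>
    (hF.monotone huv).trans_eq (hF.map_add_const v c)
  rw [abs_sub_le_iff]
  constructor
  · linarith [shift f g fun x => by linarith [(abs_le.1 (h x)).2]]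
  · linarith [shift g f fun x => by linarith [(abs_le.1 (h x)).1]]

lemma mem_Icc_of_mem_L1 (hF : IsMonotoneAffineEquivariant F) {f : X → ℝ} (hf : f ∈ L1 X) :
    F f ∈ Set.Icc 0 1 :=
  ⟨(hF.map_const 0).symm.le.trans (hF.monotone fun x => (hf x).1),
    (hF.monotone fun x => (hf x).2).trans_eq (hF.map_const 1)⟩

lemma comp (hF : IsMonotoneAffineEquivariant F) {T : (X → ℝ) → (X → ℝ)}
    (hT : ∀ x, IsMonotoneAffineEquivariant (fun f => T f x)) :
    IsMonotoneAffineEquivariant (fun f => F (T f)) where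
  monotone _ _ hfg := hF.monotone fun x => (hT x).monotone hfg
  map_affine r m f hr := by
    have hTf : T (fun x => r * f x + m) = fun x => r * T f x + m :=
      funext fun x => (hT x).map_affine r m f hr
    rw [hTf, hF.map_affine r m _ hr]

end IsMonotoneAffineEquivariant

lemma mapsTo_L1_of_rows {X : Type*} {T : (X → ℝ) → (X → ℝ)}
    (hT : ∀ x, IsMonotoneAffineEquivariant (fun f => T f x)) : MapsTo T (L1 X) (L1 X) :=
  fun _ hf x => (hT x).mem_Icc_of_mem_L1 hf

section UpperExpectation

variable {X : Type*} [Fintype X] {M : Set (X → ℝ)}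

lemma linExp_mono {p : X → ℝ} (hp : IsPMF p) {f g : X → ℝ} (hfg : f ≤ g) :
    linExp p f ≤ linExp p g :=
  Finset.sum_le_sum fun x _ => mul_le_mul_of_nonneg_left (hfg x) (hp.1 x)

lemma linExp_affine {p : X → ℝ} (hp : IsPMF p) (r m : ℝ) (f : X → ℝ) :
    linExp p (fun x => r * f x + m) = r * linExp p f + m := by
  simp only [linExp, mul_add, Finset.sum_add_distrib, Finset.mul_sum, ← Finset.sum_mul, hp.2,
    one_mul, mul_left_comm]

lemma bddAbove_image_linExp (hM : IsCredal M) (f : X → ℝ) :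
    BddAbove ((fun p => linExp p f) '' M) :=
  (hM.2.1.image (by unfold linExp; fun_prop)).bddAbove

lemma upperExp_mono (hM : IsCredal M) : Monotone (upperExp M) := fun _ g hfg =>
  csSup_le (hM.1.image _) fun _ ⟨p, hp, hpf⟩ =>
    hpf ▸ (linExp_mono (hM.2.2.2 p hp) hfg).trans
      (le_csSup (bddAbove_image_linExp hM g) ⟨p, hp, rfl⟩)

lemma upperExp_affine (hM : IsCredal M) {r : ℝ} (m : ℝ) (f : X → ℝ) (hr : 0 ≤ r) :
    upperExp M (fun x => r * f x + m) = r * upperExp M f + m := by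
  have himage : (fun p => linExp p (fun x => r * f x + m)) '' M =
      (fun t => r * t + m) '' ((fun p => linExp p f) '' M) := by
    rw [Set.image_image]
    exact Set.image_congr fun p hp => linExp_affine (hM.2.2.2 p hp) r m f
  rw [upperExp, upperExp, himage]
  exact (Monotone.map_csSup_of_continuousAt (by fun_prop)
    (fun _ _ h => by gcongr) (hM.1.image _) (bddAbove_image_linExp hM f)).symm

lemma upperExp_isMonotoneAffineEquivariant (hM : IsCredal M) :
    IsMonotoneAffineEquivariant (upperExp M) :=
  ⟨upperExp_mono hM, fun _ m f => upperExp_affine hM m f⟩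

lemma IsUpperTrans.row {T : (X → ℝ) → (X → ℝ)} (hT : IsUpperTrans T) (x : X) :
    IsMonotoneAffineEquivariant (fun f => T f x) := by
  obtain ⟨M, hM, hTM⟩ := hT
  simpa only [hTM] using upperExp_isMonotoneAffineEquivariant (hM x)

end UpperExpectation

section Distances

variable {X : Type*}

lemma abs_sub_le_rho {S : (X → ℝ) → (X → ℝ)} (hS : MapsTo S (L1 X) (L1 X)) {f : X → ℝ}
    (hf : f ∈ L1 X) (x y : X) : |S f x - S f y| ≤ rho S := by
  refine le_csSup ⟨1, ?_⟩ ⟨f, hf, x, y, rfl⟩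
  rintro _ ⟨g, hg, x, y, rfl⟩
  exact abs_sub_le_of_nonneg_of_le (hS hg x).1 (hS hg x).2 (hS hg y).1 (hS hg y).2

lemma rho_nonneg [Nonempty X] {S : (X → ℝ) → (X → ℝ)} (hS : MapsTo S (L1 X) (L1 X)) :
    0 ≤ rho S :=
  ‹Nonempty X›.elim fun x => (abs_nonneg _).trans (abs_sub_le_rho hS zero_mem_L1 x x)

variable {F G : (X → ℝ) → ℝ}

lemma le_dFun (hF : IsMonotoneAffineEquivariant F) (hG : IsMonotoneAffineEquivariant G)
    {f : X → ℝ} (hf : f ∈ L1 X) : |F f - G f| ≤ dFun F G := by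
  refine le_csSup ⟨1, ?_⟩ ⟨f, hf, rfl⟩
  rintro _ ⟨g, hg, rfl⟩
  obtain ⟨hF0, hF1⟩ := hF.mem_Icc_of_mem_L1 hg
  obtain ⟨hG0, hG1⟩ := hG.mem_Icc_of_mem_L1 hg
  exact abs_sub_le_of_nonneg_of_le hF0 hF1 hG0 hG1

lemma dFun_le {c : ℝ} (h : ∀ f ∈ L1 X, |F f - G f| ≤ c) : dFun F G ≤ c :=
  csSup_le (Set.Nonempty.image _ ⟨0, zero_mem_L1⟩) fun _ ⟨f, hf, hFG⟩ => hFG ▸ h f hf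

lemma le_dCheb [Finite X] (f g : X → ℝ) (x : X) : |f x - g x| ≤ dCheb f g :=
  le_ciSup (f := fun x => |f x - g x|) (Set.finite_range _).bddAbove x

lemma dCheb_le_dOp {T T' : (X → ℝ) → (X → ℝ)} (hT : MapsTo T (L1 X) (L1 X))
    (hT' : MapsTo T' (L1 X) (L1 X)) {f : X → ℝ} (hf : f ∈ L1 X) :
    dCheb (T f) (T' f) ≤ dOp T T' := by
  refine le_csSup ⟨1, ?_⟩ ⟨f, hf, rfl⟩
  rintro _ ⟨g, hg, rfl⟩
  exact Real.iSup_le (fun x => abs_sub_le_of_nonneg_of_le (hT hg x).1 (hT hg x).2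
    (hT' hg x).1 (hT' hg x).2) zero_le_one

end Distances

section Perturbation

variable {X : Type*}

lemma exists_mem_L1_eq_affine {g : X → ℝ} {m r : ℝ} (hr : 0 ≤ r)
    (hg : ∀ x, g x ∈ Set.Icc m (m + r)) : ∃ u ∈ L1 X, g = fun x => r * u x + m := by
  rcases hr.eq_or_lt with rfl | hr
  · exact ⟨0, zero_mem_L1, funext fun x => by simpa using (hg x)⟩
  · refine ⟨fun x => (g x - m) / r, fun x => ⟨?_, ?_⟩, funext fun x => ?_⟩
    · exact div_nonneg (sub_nonneg.2 (hg x).1) hr.le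
    · exact (div_le_one hr).2 (by linarith [(hg x).2])
    · field_simp
      ring

variable [Finite X] [Nonempty X] {F G : (X → ℝ) → ℝ}

lemma abs_sub_le_rho_mul_dFun (hF : IsMonotoneAffineEquivariant F)
    (hG : IsMonotoneAffineEquivariant G) {S : (X → ℝ) → (X → ℝ)} (hS : MapsTo S (L1 X) (L1 X))
    {f : X → ℝ} (hf : f ∈ L1 X) : |F (S f) - G (S f)| ≤ rho S * dFun F G := by
  have hρ := rho_nonneg hS
  obtain ⟨x₀, hx₀⟩ := Finite.exists_min (S f)
  obtain ⟨u, hu, hSf⟩ := exists_mem_L1_eq_affine hρ fun x =>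
    ⟨hx₀ x, by linarith [le_abs_self (S f x - S f x₀), abs_sub_le_rho hS hf x x₀]⟩
  rw [hSf, hF.map_affine _ _ _ hρ, hG.map_affine _ _ _ hρ]
  calc |rho S * F u + S f x₀ - (rho S * G u + S f x₀)| = rho S * |F u - G u| := by
        rw [add_sub_add_right_eq_sub, ← mul_sub, abs_mul, abs_of_nonneg hρ]
    _ ≤ rho S * dFun F G := mul_le_mul_of_nonneg_left (le_dFun hF hG hu) hρ

lemma abs_sub_iterate_le {T T' : (X → ℝ) → (X → ℝ)}
    (hT : ∀ x, IsMonotoneAffineEquivariant (fun f => T f x))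
    (hT' : ∀ x, IsMonotoneAffineEquivariant (fun f => T' f x)) (n : ℕ)
    (hF : IsMonotoneAffineEquivariant F) {f : X → ℝ} (hf : f ∈ L1 X) :
    |F (T^[n] f) - F (T'^[n] f)| ≤ dOp T T' * ∑ i ∈ Finset.range n, rho (T^[i]) := by
  induction n generalizing F with
  | zero => simp
  | succ n ih =>
    have hTn := (mapsTo_L1_of_rows hT).iterate n
    have step : |F (T (T^[n] f)) - F (T' (T^[n] f))| ≤ rho (T^[n]) * dOp T T' :=
      (abs_sub_le_rho_mul_dFun (hF.comp hT) (hF.comp hT') hTn hf).trans <|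
        mul_le_mul_of_nonneg_left (dFun_le fun g hg => (hF.abs_sub_le (le_dCheb _ _)).trans
          (dCheb_le_dOp (mapsTo_L1_of_rows hT) (mapsTo_L1_of_rows hT') hg)) (rho_nonneg hTn)
    rw [Function.iterate_succ_apply', Function.iterate_succ_apply', Finset.sum_range_succ]
    calc |F (T (T^[n] f)) - F (T' (T'^[n] f))|
        ≤ |F (T (T^[n] f)) - F (T' (T^[n] f))| + |F (T' (T^[n] f)) - F (T' (T'^[n] f))| :=
          abs_sub_le _ _ _
      _ ≤ rho (T^[n]) * dOp T T' + dOp T T' * ∑ i ∈ Finset.range n, rho (T^[i]) :=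
          add_le_add step (ih (hF.comp hT'))
      _ = _ := by ring

end Perturbation

theorem stmt12 {X : Type*} [Fintype X] [Nonempty X]
    (M0 M0' : Set (X → ℝ)) (h0 : IsCredal M0) (h0' : IsCredal M0')
    (T T' : (X → ℝ) → (X → ℝ)) (hT : IsUpperTrans T) (hT' : IsUpperTrans T')
    (n : ℕ) :
    dFun (fun f => upperExp M0 (T^[n] f)) (fun f => upperExp M0' (T'^[n] f)) ≤
      dFun (upperExp M0) (upperExp M0') * rho (T^[n]) +
        dOp T T' * ∑ i ∈ Finset.range n, rho (T^[i]) := by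
  have hE := upperExp_isMonotoneAffineEquivariant h0
  have hE' := upperExp_isMonotoneAffineEquivariant h0'
  have hTn := (mapsTo_L1_of_rows hT.row).iterate n
  refine dFun_le fun f hf => ?_
  calc |upperExp M0 (T^[n] f) - upperExp M0' (T'^[n] f)|
      ≤ |upperExp M0 (T^[n] f) - upperExp M0' (T^[n] f)| +
        |upperExp M0' (T^[n] f) - upperExp M0' (T'^[n] f)| := abs_sub_le _ _ _
    _ ≤ rho (T^[n]) * dFun (upperExp M0) (upperExp M0') +
        dOp T T' * ∑ i ∈ Finset.range n, rho (T^[i]) :=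
      add_le_add (abs_sub_le_rho_mul_dFun hE hE' hTn hf)
        (abs_sub_iterate_le hT.row hT'.row n hE' hf)
    _ = _ := by ring
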